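/- arXiv:1801.01530 — 2 statements merged into one kernel-verified Lean document; each statement's English description precedes it below -/
import Mathlib

section
/- Let (Ω, F, P) be a probability space with a filtration (F n)_{n ∈ ℕ}, and let (X n)_{n ∈ ℕ} be a sequence of ℕ-valued random variables adapted to (F n). Suppose that for every M ∈ ℕ there exists ε > 0 such that for every n, almost surely on the event {1 ≤ X n ≤ M} the conditional probability satisfies P(X (n+1) = 0 | F n) ≥ ε. Then almost surely on the survival event {∀ n, X n ≥ 1}, the sequence X n tends to infinity, i.e. P-almost every ω in {∀ n, X n ω ≥ 1} satisfies Tendsto (fun n => X n ω) atTop atTop. -/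
open MeasureTheory ProbabilityTheory Filter

lemma aux_sum_tendsto_atTop {f : ℕ → ℝ} {S : Set ℕ} (hS : S.Infinite) {ε : ℝ} (hε : 0 < ε)
    (h0 : ∀ k, 0 ≤ f k) (hf : ∀ k ∈ S, ε ≤ f k) :
    Tendsto (fun n => ∑ k ∈ Finset.range n, f k) atTop atTop := by
  apply tendsto_atTop_atTop_of_monotone
  · intro a b hab
    exact Finset.sum_le_sum_of_subset_of_nonneg (Finset.range_subset_range.2 hab)
      (fun k _ _ => h0 k)
  · intro b
    obtain ⟨N, hN⟩ := exists_nat_ge (b / ε)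
    obtain ⟨T, hTS, hTcard⟩ := hS.exists_subset_card_eq N
    refine ⟨T.sup id + 1, ?_⟩
    have hTsub : T ⊆ Finset.range (T.sup id + 1) := fun k hk =>
      Finset.mem_range.2 (Nat.lt_succ_of_le (Finset.le_sup (f := id) hk))
    have h1 : b ≤ ε * N := by
      rw [div_le_iff₀ hε] at hN
      linarith [hN]
    have h2 : ε * (N : ℝ) ≤ ∑ k ∈ T, f k := by
      have := Finset.card_nsmul_le_sum T f ε (fun k hk => hf k (hTS hk))
      rw [hTcard] at this
      simpa [nsmul_eq_mul, mul_comm] using this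
    have h3 : ∑ k ∈ T, f k ≤ ∑ k ∈ Finset.range (T.sup id + 1), f k :=
      Finset.sum_le_sum_of_subset_of_nonneg hTsub (fun k _ _ => h0 k)
    linarith [h2, h3]

/-- If a population has, for each bound `M`, a uniformly positive chance of dying out in one
step whenever its size lies in `[1, M]`, then almost surely on the survival event the
population size tends to infinity. -/
theorem survival_implies_tendsto_atTop
    {Ω : Type*} [m0 : MeasurableSpace Ω] (P : Measure Ω) [IsProbabilityMeasure P]
    (F : Filtration ℕ m0)
    (X : ℕ → Ω → ℕ)
    (hadapted : ∀ n, Measurable[F n] (X n))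
    (hcond : ∀ M : ℕ, ∃ ε > (0 : ℝ), ∀ n, ∀ᵐ ω ∂P, (1 ≤ X n ω ∧ X n ω ≤ M) →
      ε ≤ (P[Set.indicator {ω' | X (n + 1) ω' = 0} (fun _ => (1 : ℝ)) | F n]) ω) :
    ∀ᵐ ω ∂P, (∀ n, 1 ≤ X n ω) → Tendsto (fun n => X n ω) atTop atTop := by
  choose ε hε hcond' using hcond
  set s : ℕ → Set Ω := fun n => {ω | X n ω = 0} with hs_def
  have hsm : ∀ n, MeasurableSet[F n] (s n) := fun n =>
    (hadapted n) (measurableSet_singleton 0)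
  have hBC := ae_mem_limsup_atTop_iff (ℱ := F) P hsm
  have hnonneg : ∀ᵐ ω ∂P, ∀ k, 0 ≤ (P[(s (k + 1)).indicator (1 : Ω → ℝ) | F k]) ω :=
    ae_all_iff.2 fun k => condExp_nonneg (Filter.Eventually.of_forall
      (fun ω => Set.indicator_nonneg (fun _ _ => zero_le_one) ω))
  have hcondM : ∀ᵐ ω ∂P, ∀ M k, (1 ≤ X k ω ∧ X k ω ≤ M) →
      ε M ≤ (P[(s (k + 1)).indicator (1 : Ω → ℝ) | F k]) ω :=
    ae_all_iff.2 fun M => ae_all_iff.2 fun k => hcond' M k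
  filter_upwards [hBC, hnonneg, hcondM] with ω hωBC hωnn hωc hsurv
  rw [tendsto_atTop_atTop]
  intro M
  by_contra hcontra
  push_neg at hcontra
  have hSinf : {k | X k ω ≤ M}.Infinite := by
    rw [← Nat.frequently_atTop_iff_infinite]
    rw [frequently_atTop]
    intro a
    obtain ⟨n, hn, hn'⟩ := hcontra a
    exact ⟨n, hn, hn'.le⟩
  have htend : Tendsto (fun n => ∑ k ∈ Finset.range n,
      (P[(s (k + 1)).indicator (1 : Ω → ℝ) | F k]) ω) atTop atTop := by
    refine aux_sum_tendsto_atTop hSinf (hε M) hωnn ?_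
    intro k hk
    exact hωc M k ⟨hsurv k, hk⟩
  have hmem : ω ∈ limsup s atTop := hωBC.2 htend
  rw [Filter.mem_limsup_iff_frequently_mem] at hmem
  obtain ⟨n, -, hn⟩ := (frequently_atTop.1 hmem) 0
  exact absurd (hsurv n) (by simp [hs_def] at hn; omega)
end

section
/- Let p : ℕ → ℝ satisfy p k ≥ 0 for all k, ∑' k, p k = 1, and suppose the series ∑' k, (k : ℝ) * p k converges with sum m > 1. Then there exists q ∈ [0, 1) such that ∑' k, p k * q ^ k = q. -/
/-!
Write `f(s) = ∑ p_k s^k`. Summing `p_k (1 - s^k) ≥ p_k (1 - s) k s^k` gives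
`1 - f(s) ≥ (1 - s) ∑ k p_k s^k`, and by Abel's theorem the last series tends to `m > 1` as
`s → 1⁻`; hence `f(s) < s` for some `s < 1`. Since `f(0) = p_0 ≥ 0`, the intermediate value
theorem gives a fixed point in `[0, s]`.
-/

open Filter Finset Set Topology

theorem summable_of_tsum_ne_zero {ι α : Type*} [AddCommMonoid α] [TopologicalSpace α]
    {f : ι → α} (h : ∑' i, f i ≠ 0) : Summable f :=
  not_imp_comm.mp tsum_eq_zero_of_not_summable h

theorem one_sub_mul_natCast_mul_pow_le {R : Type*} [CommRing R] [LinearOrder R]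
    [IsStrictOrderedRing R] {s : R} (hs₀ : 0 ≤ s) (hs₁ : s ≤ 1) (k : ℕ) :
    (1 - s) * (k * s ^ k) ≤ 1 - s ^ k :=
  calc (1 - s) * (k * s ^ k) = (1 - s) * ∑ _i ∈ range k, s ^ k := by simp
    _ ≤ (1 - s) * ∑ i ∈ range k, s ^ i :=
        mul_le_mul_of_nonneg_left (sum_le_sum fun i hi =>
          pow_le_pow_of_le_one hs₀ hs₁ (mem_range.mp hi).le) (sub_nonneg.mpr hs₁)
    _ = 1 - s ^ k := mul_neg_geom_sum s k

theorem summable_mul_pow_of_nonneg {a : ℕ → ℝ} (ha : ∀ k, 0 ≤ a k) (hsum : Summable a)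
    {s : ℝ} (hs₀ : 0 ≤ s) (hs₁ : s ≤ 1) : Summable fun k => a k * s ^ k :=
  hsum.of_nonneg_of_le (fun k => mul_nonneg (ha k) (pow_nonneg hs₀ k))
    fun k => mul_le_of_le_one_right (ha k) (pow_le_one₀ hs₀ hs₁)

theorem continuousOn_tsum_mul_pow {a : ℕ → ℝ} (ha : Summable fun k => ‖a k‖) :
    ContinuousOn (fun s => ∑' k, a k * s ^ k) (Icc (-1) 1) := by
  refine continuousOn_tsum (fun k => (continuous_const.mul (continuous_pow k)).continuousOn) ha ?_
  intro k s hs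
  rw [norm_mul, norm_pow]
  exact mul_le_of_le_one_right (norm_nonneg _) (pow_le_one₀ (norm_nonneg _) (abs_le.mpr hs))

section GeneratingFunction

variable {p : ℕ → ℝ} {m : ℝ}

theorem one_sub_mul_tsum_le_one_sub_tsum (hp : ∀ k, 0 ≤ p k) (hP : HasSum p 1)
    (hmean : Summable fun k : ℕ => (k : ℝ) * p k) {s : ℝ} (hs₀ : 0 ≤ s) (hs₁ : s ≤ 1) :
    (1 - s) * ∑' k : ℕ, (k : ℝ) * p k * s ^ k ≤ 1 - ∑' k, p k * s ^ k := by
  have hpk : ∀ k : ℕ, 0 ≤ (k : ℝ) * p k := fun k => mul_nonneg k.cast_nonneg (hp k)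
  have hterm (k : ℕ) : (1 - s) * ((k : ℝ) * p k * s ^ k) ≤ p k - p k * s ^ k := by
    linear_combination mul_le_mul_of_nonneg_left (one_sub_mul_natCast_mul_pow_le hs₀ hs₁ k) (hp k)
  have hgen := summable_mul_pow_of_nonneg hp hP.summable hs₀ hs₁
  calc (1 - s) * ∑' k : ℕ, (k : ℝ) * p k * s ^ k
      = ∑' k : ℕ, (1 - s) * ((k : ℝ) * p k * s ^ k) := tsum_mul_left.symm
    _ ≤ ∑' k, (p k - p k * s ^ k) :=
        ((summable_mul_pow_of_nonneg hpk hmean hs₀ hs₁).mul_left _).tsum_le_tsum hterm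
          (hP.summable.sub hgen)
    _ = 1 - ∑' k, p k * s ^ k := by rw [hP.summable.tsum_sub hgen, hP.tsum_eq]

theorem eventually_tsum_mul_pow_lt_self (hp : ∀ k, 0 ≤ p k) (hP : HasSum p 1)
    (hmean : HasSum (fun k : ℕ => (k : ℝ) * p k) m) (hm : 1 < m) :
    ∀ᶠ s in 𝓝[<] 1, ∑' k, p k * s ^ k < s := by
  have habel := Real.tendsto_tsum_powerSeries_nhdsWithin_lt hmean.tendsto_sum_nat
  filter_upwards [habel.eventually_const_lt hm, Ioo_mem_nhdsLT zero_lt_one] with s hlarge hs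
  have hle := one_sub_mul_tsum_le_one_sub_tsum hp hP hmean.summable hs.1.le hs.2.le
  linarith [mul_lt_mul_of_pos_left hlarge (sub_pos.mpr hs.2)]

end GeneratingFunction

theorem generating_function_fixed_point_lt_one_general
    (p : ℕ → ℝ) (hp : ∀ k, 0 ≤ p k)
    (hsum : ∑' k, p k = 1)
    (m : ℝ)
    (hm : ∑' k : ℕ, (k : ℝ) * p k = m) (hm1 : 1 < m) :
    ∃ q ∈ Set.Ico (0 : ℝ) 1, ∑' k, p k * q ^ k = q := by
  have hP : HasSum p 1 := hsum ▸ (summable_of_tsum_ne_zero (hsum ▸ one_ne_zero)).hasSum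
  have hmean : HasSum (fun k : ℕ => (k : ℝ) * p k) m :=
    hm ▸ (summable_of_tsum_ne_zero (by linarith)).hasSum
  obtain ⟨s, hfs, hs⟩ :=
    ((eventually_tsum_mul_pow_lt_self hp hP hmean hm1).and (Ioo_mem_nhdsLT zero_lt_one)).exists
  have hcont : ContinuousOn (fun x => ∑' k, p k * x ^ k - x) (Icc 0 s) :=
    ((continuousOn_tsum_mul_pow hP.summable.norm).mono
      (Icc_subset_Icc (by norm_num) hs.2.le)).sub continuousOn_id
  have hf0 : ∑' k, p k * (0 : ℝ) ^ k = p 0 := by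
    rw [tsum_eq_single 0 fun k hk => by simp [hk]]; simp
  have hroot : (0 : ℝ) ∈ Icc (∑' k, p k * s ^ k - s) (∑' k, p k * 0 ^ k - 0) :=
    ⟨by linarith, by rw [hf0, sub_zero]; exact hp 0⟩
  obtain ⟨q, hq, hfix⟩ := intermediate_value_Icc' hs.1.le hcont hroot
  exact ⟨q, ⟨hq.1, hq.2.trans_lt hs.2⟩, sub_eq_zero.mp hfix⟩

/-- The generating function of a supercritical offspring distribution has a fixed point in
`[0, 1)`. -/
theorem generating_function_fixed_point_lt_one
    (p : ℕ → ℝ) (hp : ∀ k, 0 ≤ p k)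
    (hsum : ∑' k, p k = 1)
    (m : ℝ) (hmean : Summable (fun k : ℕ => (k : ℝ) * p k))
    (hm : ∑' k : ℕ, (k : ℝ) * p k = m) (hm1 : 1 < m) :
    ∃ q ∈ Set.Ico (0 : ℝ) 1, ∑' k, p k * q ^ k = q :=
  generating_function_fixed_point_lt_one_general p hp hsum m hm hm1
end
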